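/- Let k ≥ 3, let x₁, …, x_{k−1} be pairwise distinct nodes of V and X = {x₁, …, x_{k−1}}, and assume that every probe (x₁, y, x₂, …, x_{k−1}) with y ∈ V \ X fails. If for some x ∈ X, some y ∈ V \ X, and some arrangement of the nodes of X \ {x} in the middle positions, the probe (x, …, y) succeeds (an injective k-tuple whose first node is x, whose last node is y, and whose middle k−2 entries are exactly the nodes of X \ {x}), then x ∈ C and y ∈ C. -/

import Mathlib

/-!
The probe `p` visits every node of `X ∪ {y}`. If it succeeded because it avoids `C`, then so
does the probe `(x₁, y, x₂, …, x_{k-1})`, which uses only nodes of `X ∪ {y}`; but that probe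
fails. So `p` succeeded because both its ends `x i` and `y` are compromised.
-/

variable {V : Type*}

def probeSucceeds {k : ℕ} (hk : 0 < k) (C : Set V) (p : Fin k → V) : Prop :=
  (∀ i, p i ∉ C) ∨ (p ⟨0, hk⟩ ∈ C ∧ p ⟨k - 1, by omega⟩ ∈ C)

/-- The probe `(x₁, y, x₂, …, x_{k-1})`: the node `y` is inserted in the second
position of the tuple `x₁, …, x_{k-1}`. -/
def probe1 {k : ℕ} (hk : 3 ≤ k) (x : Fin (k - 1) → V) (y : V) : Fin k → V :=
  fun i =>
    if (i : ℕ) = 0 then x ⟨0, by omega⟩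
    else if (i : ℕ) = 1 then y
    else x ⟨(i : ℕ) - 1, by have := i.isLt; omega⟩

theorem probe1_mem_insert_range {k : ℕ} (hk : 3 ≤ k) (x : Fin (k - 1) → V) (y : V)
    (j : Fin k) : probe1 hk x y j ∈ insert y (Set.range x) := by
  unfold probe1
  split_ifs
  · exact Or.inr ⟨_, rfl⟩
  · exact Or.inl rfl
  · exact Or.inr ⟨_, rfl⟩

theorem probeSucceeds_probe1_of_disjoint {k : ℕ} (hk : 3 ≤ k) (hk₀ : 0 < k) {C : Set V}
    {x : Fin (k - 1) → V} {y : V} (h : Disjoint (insert y (Set.range x)) C) :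
    probeSucceeds hk₀ C (probe1 hk x y) :=
  Or.inl fun j => Set.disjoint_left.mp h (probe1_mem_insert_range hk x y j)

/-- Suppose every probe `(x₁, y, x₂, …, x_{k-1})` with `y ∉ X` fails.  If some
probe whose first node is `x i ∈ X`, whose last node is `y ∉ X` and whose
middle `k - 2` entries are exactly the nodes of `X \ {x i}` succeeds, then
`x i` and `y` are both compromised. -/
theorem stmt4 {k : ℕ} (hk : 3 ≤ k) (C : Set V)
    (x : Fin (k - 1) → V)
    (hfail : ∀ y, y ∉ Set.range x → ¬ probeSucceeds (by omega) C (probe1 hk x y))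
    (i : Fin (k - 1)) (y : V) (hy : y ∉ Set.range x)
    (p : Fin k → V)
    (hfirst : p ⟨0, by omega⟩ = x i) (hlast : p ⟨k - 1, by omega⟩ = y)
    (hmid : {v : V | ∃ j : Fin k, 0 < (j : ℕ) ∧ (j : ℕ) < k - 1 ∧ p j = v}
      = Set.range x \ {x i})
    (hsucc : probeSucceeds (by omega) C p) :
    x i ∈ C ∧ y ∈ C := by
  rcases hsucc with hclean | hends
  · have hrange : Set.range x ⊆ Set.range p := by
      refine (Set.sdiff_singleton_subset_iff.mp hmid.ge).trans ?_
      rintro v (rfl | ⟨j, -, -, rfl⟩)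
      exacts [⟨_, hfirst⟩, ⟨j, rfl⟩]
    have hcover : insert y (Set.range x) ⊆ Set.range p :=
      Set.insert_subset ⟨_, hlast⟩ hrange
    have hdisj : Disjoint (Set.range p) C :=
      Set.disjoint_left.mpr (Set.forall_mem_range.mpr hclean)
    exact absurd (probeSucceeds_probe1_of_disjoint hk _ (hdisj.mono_left hcover)) (hfail y hy)
  · rwa [hfirst, hlast] at hends
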